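/- Let T>0 and 0<α,β≤1 with α+β>1. Let f,g : [0,T] → ℝ be respectively α-Hölder and β-Hölder continuous. Then there exists a function φ : [0,T] → ℝ and a constant c>0 such that |φ_t − φ_s − f_s·(g_t − g_s)| ≤ c|t−s|^{α+β} for all 0≤s≤t≤T; moreover any two such functions φ differ by an additive constant. (The function φ is the Young integral ∫₀^• f_s dg_s.) -/

import Mathlib

/-!
With `θ = α + β > 1`, the increment `μ s t = f s (g t - g s)` is additive up to the defect
`μ s t - μ s u - μ u t = -(f u - f s) (g t - g u) = O((t - s) ^ θ)`, so the sewing lemma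
applies.
By Young's maximal inequality, every Riemann sum of `μ` over a partition of `[s, t]` is
`μ s t + O((t - s) ^ θ)` uniformly in the partition. The Riemann sums along the dyadic partitions
of `[0, T]` stopped at `t` converge geometrically (a refinement costs `2 ^ n` defects of size
`(T / 2 ^ n) ^ θ`), and their limit is the sewn map `φ t`. Two such maps differ by a function
that is Hölder of exponent `θ > 1`, hence constant.
-/

open Finset Filter Topology

def AlmostAdditive (μ : ℝ → ℝ → ℝ) (T K θ : ℝ) : Prop :=
  ∀ s u t, 0 ≤ s → s ≤ u → u ≤ t → t ≤ T →
    |μ s t - μ s u - μ u t| ≤ K * (t - s) ^ θ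

def riemannSum (μ : ℝ → ℝ → ℝ) (π : ℕ → ℝ) (m : ℕ) : ℝ :=
  ∑ i ∈ range m, μ (π i) (π (i + 1))

lemma sum_range_two_mul {M : Type*} [AddCommMonoid M] (h : ℕ → M) (n : ℕ) :
    ∑ i ∈ range (2 * n), h i = ∑ i ∈ range n, (h (2 * i) + h (2 * i + 1)) := by
  induction n with
  | zero => simp
  | succ n ih => rw [mul_add_one, sum_range_succ, sum_range_succ, sum_range_succ, ih, add_assoc]

lemma min_sub_min_le_sub {a b : ℝ} (hab : a ≤ b) (c : ℝ) : min b c - min a c ≤ b - a :=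
  (le_abs_self _).trans <| (abs_min_sub_min_le_max _ _ _ _).trans <| by
    simp [abs_of_nonneg (sub_nonneg.2 hab), hab]

lemma abs_sum_range_two_pow_le {F : ℕ → ℝ} {T K θ : ℝ} (hT : 0 ≤ T) (n : ℕ)
    (hF : ∀ i < 2 ^ n, |F i| ≤ K * (T / 2 ^ n) ^ θ) :
    |∑ i ∈ range (2 ^ n), F i| ≤ K * T ^ θ * ((2 : ℝ) ^ (1 - θ)) ^ n :=
  calc |∑ i ∈ range (2 ^ n), F i| ≤ ∑ i ∈ range (2 ^ n), |F i| := abs_sum_le_sum_abs _ _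
    _ ≤ ∑ _i ∈ range (2 ^ n), K * (T / 2 ^ n) ^ θ :=
        sum_le_sum fun i hi => hF i (mem_range.1 hi)
    _ = K * T ^ θ * ((2 : ℝ) ^ (1 - θ)) ^ n := by
      have h2n : (0 : ℝ) < 2 ^ n := by positivity
      rw [sum_const, card_range, nsmul_eq_mul, Real.rpow_pow_comm zero_le_two,
        Real.div_rpow hT h2n.le, Real.rpow_sub h2n, Real.rpow_one]
      push_cast
      field_simp

lemma summable_two_div_succ_rpow {θ : ℝ} (hθ : 1 < θ) :
    Summable fun k : ℕ => (2 / ((k : ℝ) + 1)) ^ θ :=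
  (((Real.summable_one_div_nat_add_rpow 1 θ).2 hθ).mul_left (2 ^ θ)).congr fun k => by
    rw [abs_of_pos (by positivity), Real.div_rpow zero_le_two (by positivity)]
    ring

lemma riemannSum_skip (μ : ℝ → ℝ → ℝ) (π : ℕ → ℝ) {j m : ℕ} (hj : j ≤ m) :
    riemannSum μ π (m + 2) = riemannSum μ (fun i => π (if i ≤ j then i else i + 1)) (m + 1)
      + (μ (π j) (π (j + 1)) + μ (π (j + 1)) (π (j + 2)) - μ (π j) (π (j + 2))) := by
  obtain ⟨r, rfl⟩ := Nat.exists_eq_add_of_le hj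
  have hhead : ∑ i ∈ range j, μ (π (if i ≤ j then i else i + 1))
      (π (if i + 1 ≤ j then i + 1 else i + 1 + 1)) = ∑ i ∈ range j, μ (π i) (π (i + 1)) :=
    sum_congr rfl fun i hi => by
      have := mem_range.mp hi
      rw [if_pos (by omega), if_pos (by omega)]
  simp only [riemannSum]
  rw [show j + r + 2 = j + (r + 1 + 1) by ring, show j + r + 1 = j + (r + 1) by ring,
    sum_range_add _ j (r + 1 + 1), sum_range_add _ j (r + 1), hhead]
  simp only [sum_range_succ', add_zero, le_refl, if_true,
    show ∀ i, ¬ j + (i + 1) ≤ j from fun i => by omega,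
    show ∀ i, ¬ j + i + 1 ≤ j from fun i => by omega, if_false]
  ring_nf

lemma exists_sub_le_of_monotone {π : ℕ → ℝ} (hπ : Monotone π) (m : ℕ) :
    ∃ j ≤ m, π (j + 2) - π j ≤ 2 / ((m : ℝ) + 1) * (π (m + 2) - π 0) := by
  have htel : ∑ j ∈ range (m + 1), (π (j + 2) - π j)
      = (π (m + 2) - π 1) + (π (m + 1) - π 0) := by
    rw [← sum_range_sub (fun i => π (i + 1)), ← sum_range_sub π, ← sum_add_distrib]
    exact sum_congr rfl fun j _ => by ring
  have hsum : ∑ j ∈ range (m + 1), (π (j + 2) - π j)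
      ≤ ∑ _j ∈ range (m + 1), 2 / ((m : ℝ) + 1) * (π (m + 2) - π 0) := by
    rw [htel, sum_const, card_range, nsmul_eq_mul, Nat.cast_succ, ← mul_assoc,
      mul_div_cancel₀ _ (by positivity)]
    linarith [hπ (Nat.zero_le 1), hπ (Nat.le_succ (m + 1))]
  obtain ⟨j, hj, hle⟩ := exists_le_of_sum_le nonempty_range_add_one hsum
  exact ⟨j, Nat.lt_succ_iff.mp (mem_range.mp hj), hle⟩

namespace AlmostAdditive

variable {μ : ℝ → ℝ → ℝ} {T K θ : ℝ}

theorem abs_add_sub_le (hμ : AlmostAdditive μ T K θ) (hK : 0 ≤ K) (hθ : 0 ≤ θ)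
    {a b c δ : ℝ} (ha : 0 ≤ a) (hab : a ≤ b) (hbc : b ≤ c) (hcT : c ≤ T)
    (hδ : c - a ≤ δ) :
    |μ a b + μ b c - μ a c| ≤ K * δ ^ θ :=
  calc |μ a b + μ b c - μ a c| = |μ a c - μ a b - μ b c| := by rw [← abs_neg]; ring_nf
    _ ≤ K * (c - a) ^ θ := hμ a b c ha hab hbc hcT
    _ ≤ K * δ ^ θ := by
      gcongr
      linarith

theorem abs_riemannSum_sub_le (hμ : AlmostAdditive μ T K θ) (hK : 0 ≤ K) (hθ : 0 ≤ θ)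
    (m : ℕ) {π : ℕ → ℝ} (hπ : Monotone π) (h0 : 0 ≤ π 0) (hT : π (m + 1) ≤ T) :
    |riemannSum μ π (m + 1) - μ (π 0) (π (m + 1))|
      ≤ K * (∑ k ∈ range m, (2 / ((k : ℝ) + 1)) ^ θ) * (π (m + 1) - π 0) ^ θ := by
  induction m generalizing π with
  | zero => simp [riemannSum]
  | succ m ih =>
    -- Young's argument: some interior point has its two neighbours within
    -- `2 (π (m + 2) - π 0) / (m + 1)` of each other; deleting it costs a single defect.
    obtain ⟨j, hjm, hj⟩ := exists_sub_le_of_monotone hπ m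
    set π' : ℕ → ℝ := fun i => π (if i ≤ j then i else i + 1)
    have hπ' : Monotone π' := hπ.comp (monotone_nat_of_le_succ fun i => by split_ifs <;> omega)
    have hπ'0 : π' 0 = π 0 := by simp [π']
    have hπ'last : π' (m + 1) = π (m + 2) := by simp [π', show ¬ m + 1 ≤ j by omega]
    have hrest := ih hπ' (hπ'0 ▸ h0) (hπ'last ▸ hT)
    rw [hπ'0, hπ'last] at hrest
    have hdefect : |μ (π j) (π (j + 1)) + μ (π (j + 1)) (π (j + 2)) - μ (π j) (π (j + 2))|
        ≤ K * ((2 / ((m : ℝ) + 1)) ^ θ * (π (m + 2) - π 0) ^ θ) :=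
      calc _ ≤ K * (2 / ((m : ℝ) + 1) * (π (m + 2) - π 0)) ^ θ :=
            hμ.abs_add_sub_le hK hθ (h0.trans (hπ j.zero_le)) (hπ (by omega)) (hπ (by omega))
              ((hπ (by omega)).trans hT) hj
        _ = K * ((2 / ((m : ℝ) + 1)) ^ θ * (π (m + 2) - π 0) ^ θ) := by
            rw [Real.mul_rpow (by positivity) (sub_nonneg.2 (hπ (Nat.zero_le _)))]
    rw [riemannSum_skip μ π hjm, sum_range_succ]
    calc _ ≤ |riemannSum μ π' (m + 1) - μ (π 0) (π (m + 2))|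
          + |μ (π j) (π (j + 1)) + μ (π (j + 1)) (π (j + 2)) - μ (π j) (π (j + 2))| := by
          rw [add_sub_right_comm]; exact abs_add_le _ _
      _ ≤ _ := add_le_add hrest hdefect
      _ = _ := by ring

theorem abs_sub_min_sub_max_le (hμ : AlmostAdditive μ T K θ) (hθ : θ ≠ 0) {a b s : ℝ}
    (ha : 0 ≤ a) (hab : a ≤ b) (hbT : b ≤ T) (hs : 0 ≤ s) (hsT : s ≤ T) :
    |μ a b - μ (min a s) (min b s) - μ (max a s) (max b s)| ≤ K * (b - a) ^ θ := by
  have hss : μ s s = 0 := by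
    simpa [Real.zero_rpow hθ] using hμ s s s hs le_rfl le_rfl hsT
  have hbound : 0 ≤ K * (b - a) ^ θ := (abs_nonneg _).trans (hμ a a b ha le_rfl hab hbT)
  rcases le_total b s with hbs | hsb
  · simpa [min_eq_left hbs, min_eq_left (hab.trans hbs), max_eq_right hbs,
      max_eq_right (hab.trans hbs), hss] using hbound
  rcases le_total s a with hsa | has
  · simpa [min_eq_right hsa, min_eq_right (hsa.trans hab), max_eq_left hsa,
      max_eq_left (hsa.trans hab), hss] using hbound
  · simpa [min_eq_left has, min_eq_right hsb, max_eq_right has, max_eq_left hsb]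
      using hμ a s b ha has hsb hbT

end AlmostAdditive

noncomputable def dyadicGrid (T : ℝ) (n : ℕ) (t : ℝ) (i : ℕ) : ℝ :=
  min (i * T / 2 ^ n) t

noncomputable def dyadicSum (μ : ℝ → ℝ → ℝ) (T : ℝ) (n : ℕ) (t : ℝ) : ℝ :=
  riemannSum μ (dyadicGrid T n t) (2 ^ n)

section dyadicGrid

variable {T t : ℝ} {n : ℕ}

lemma dyadicGrid_monotone (hT : 0 ≤ T) : Monotone (dyadicGrid T n t) := fun i j hij => by
  unfold dyadicGrid; gcongr

lemma dyadicGrid_nonneg (hT : 0 ≤ T) (ht : 0 ≤ t) (i : ℕ) : 0 ≤ dyadicGrid T n t i :=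
  le_min (by positivity) ht

lemma dyadicGrid_le (i : ℕ) : dyadicGrid T n t i ≤ t := min_le_right _ _

lemma dyadicGrid_zero (ht : 0 ≤ t) : dyadicGrid T n t 0 = 0 := by simp [dyadicGrid, ht]

lemma dyadicGrid_two_pow (htT : t ≤ T) : dyadicGrid T n t (2 ^ n) = t := by
  simp [dyadicGrid, htT]

lemma dyadicGrid_two_mul (i : ℕ) : dyadicGrid T (n + 1) t (2 * i) = dyadicGrid T n t i := by
  simp only [dyadicGrid]; push_cast; rw [pow_succ]; field_simp

lemma dyadicGrid_succ_sub_le (hT : 0 ≤ T) (i : ℕ) :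
    dyadicGrid T n t (i + 1) - dyadicGrid T n t i ≤ T / 2 ^ n :=
  (min_sub_min_le_sub (by gcongr; exact_mod_cast i.le_succ) t).trans_eq (by push_cast; ring)

lemma min_dyadicGrid {s : ℝ} (hst : s ≤ t) (i : ℕ) :
    min (dyadicGrid T n t i) s = dyadicGrid T n s i := by
  simp only [dyadicGrid, min_assoc, min_eq_right hst]

end dyadicGrid

namespace AlmostAdditive

variable {μ : ℝ → ℝ → ℝ} {T K θ : ℝ}

theorem abs_dyadicSum_succ_sub_le (hμ : AlmostAdditive μ T K θ) (hT : 0 ≤ T) (hK : 0 ≤ K)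
    (hθ : 0 ≤ θ) (n : ℕ) {t : ℝ} (ht0 : 0 ≤ t) (htT : t ≤ T) :
    |dyadicSum μ T (n + 1) t - dyadicSum μ T n t|
      ≤ K * T ^ θ * ((2 : ℝ) ^ (1 - θ)) ^ n := by
  have hpaired : dyadicSum μ T (n + 1) t = ∑ i ∈ range (2 ^ n),
      (μ (dyadicGrid T n t i) (dyadicGrid T (n + 1) t (2 * i + 1))
        + μ (dyadicGrid T (n + 1) t (2 * i + 1)) (dyadicGrid T n t (i + 1))) := by
    rw [dyadicSum, riemannSum, pow_succ, mul_comm, sum_range_two_mul]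
    refine sum_congr rfl fun i _ => ?_
    rw [dyadicGrid_two_mul, show 2 * i + 1 + 1 = 2 * (i + 1) by ring, dyadicGrid_two_mul]
  rw [hpaired, dyadicSum, riemannSum, ← sum_sub_distrib]
  refine abs_sum_range_two_pow_le hT n fun i _ => ?_
  have hpq : dyadicGrid T n t i ≤ dyadicGrid T (n + 1) t (2 * i + 1) := by
    rw [← dyadicGrid_two_mul]; exact dyadicGrid_monotone hT (Nat.le_succ _)
  have hqp : dyadicGrid T (n + 1) t (2 * i + 1) ≤ dyadicGrid T n t (i + 1) := by
    rw [← dyadicGrid_two_mul (n := n) (i + 1)]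
    exact dyadicGrid_monotone hT (show 2 * i + 1 ≤ 2 * (i + 1) by omega)
  exact hμ.abs_add_sub_le hK hθ (dyadicGrid_nonneg hT ht0 i) hpq hqp
    ((dyadicGrid_le _).trans htT) (dyadicGrid_succ_sub_le hT i)

theorem abs_dyadicSum_sub_sub_le (hμ : AlmostAdditive μ T K θ) (hT : 0 ≤ T) (hK : 0 ≤ K)
    (hθ : 0 < θ) (n : ℕ) {s t : ℝ} (hs0 : 0 ≤ s) (hst : s ≤ t) (htT : t ≤ T) :
    |dyadicSum μ T n t - dyadicSum μ T n s
      - riemannSum μ (fun i => max (dyadicGrid T n t i) s) (2 ^ n)|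
      ≤ K * T ^ θ * ((2 : ℝ) ^ (1 - θ)) ^ n := by
  simp only [dyadicSum, riemannSum, ← min_dyadicGrid hst, ← sum_sub_distrib]
  refine abs_sum_range_two_pow_le hT n fun i _ => ?_
  have hmono := dyadicGrid_monotone hT (n := n) (t := t) (Nat.le_succ i)
  refine (hμ.abs_sub_min_sub_max_le hθ.ne' (dyadicGrid_nonneg hT (hs0.trans hst) i) hmono
    ((dyadicGrid_le _).trans htT) hs0 (hst.trans htT)).trans ?_
  exact mul_le_mul_of_nonneg_left
    (Real.rpow_le_rpow (sub_nonneg.2 hmono) (dyadicGrid_succ_sub_le hT i) hθ.le) hK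

theorem abs_dyadicSum_sub_sub_le_add (hμ : AlmostAdditive μ T K θ) (hT : 0 ≤ T) (hK : 0 ≤ K)
    (hθ : 1 < θ) (n : ℕ) {s t : ℝ} (hs0 : 0 ≤ s) (hst : s ≤ t) (htT : t ≤ T) :
    |dyadicSum μ T n t - dyadicSum μ T n s - μ s t|
      ≤ K * (∑' k : ℕ, (2 / ((k : ℝ) + 1)) ^ θ) * (t - s) ^ θ
        + K * T ^ θ * ((2 : ℝ) ^ (1 - θ)) ^ n := by
  obtain ⟨m, hm⟩ := Nat.exists_eq_add_one_of_ne_zero (pow_ne_zero n two_ne_zero)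
  set ρ : ℕ → ℝ := fun i => max (dyadicGrid T n t i) s
  have hρ0 : ρ 0 = s := by simp [ρ, dyadicGrid_zero (hs0.trans hst), hs0]
  have hρm : ρ (m + 1) = t := by simp [ρ, ← hm, dyadicGrid_two_pow htT, hst]
  have hmaximal := hμ.abs_riemannSum_sub_le (π := ρ) hK (by linarith) m
    ((dyadicGrid_monotone hT).max monotone_const) (by rw [hρ0]; exact hs0)
    (by rw [hρm]; exact htT)
  rw [hρ0, hρm, ← hm] at hmaximal
  have hpartial : ∑ k ∈ range m, (2 / ((k : ℝ) + 1)) ^ θ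
      ≤ ∑' k : ℕ, (2 / ((k : ℝ) + 1)) ^ θ :=
    (summable_two_div_succ_rpow hθ).sum_le_tsum _ fun k _ => by positivity
  calc _ ≤ |dyadicSum μ T n t - dyadicSum μ T n s - riemannSum μ ρ (2 ^ n)|
        + |riemannSum μ ρ (2 ^ n) - μ s t| := abs_sub_le _ _ _
    _ ≤ K * T ^ θ * ((2 : ℝ) ^ (1 - θ)) ^ n
        + K * (∑ k ∈ range m, (2 / ((k : ℝ) + 1)) ^ θ) * (t - s) ^ θ :=
        add_le_add (hμ.abs_dyadicSum_sub_sub_le hT hK (by linarith) n hs0 hst htT) hmaximal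
    _ ≤ _ := by
        rw [add_comm]
        gcongr

theorem exists_abs_sub_sub_le (hμ : AlmostAdditive μ T K θ) (hT : 0 ≤ T) (hK : 0 ≤ K)
    (hθ : 1 < θ) :
    ∃ φ : ℝ → ℝ, ∀ s t, 0 ≤ s → s ≤ t → t ≤ T →
      |φ t - φ s - μ s t| ≤ K * (∑' k : ℕ, (2 / ((k : ℝ) + 1)) ^ θ) * (t - s) ^ θ := by
  set r : ℝ := 2 ^ (1 - θ)
  have hr : r < 1 := Real.rpow_lt_one_of_one_lt_of_neg one_lt_two (by linarith)
  have hcauchy : ∀ t, 0 ≤ t → t ≤ T → CauchySeq fun n => dyadicSum μ T n t :=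
    fun t ht0 htT => cauchySeq_of_le_geometric r (K * T ^ θ) hr fun n => by
      rw [Real.dist_eq, abs_sub_comm]
      exact hμ.abs_dyadicSum_succ_sub_le hT hK (by linarith) n ht0 htT
  refine ⟨fun t => limUnder atTop fun n => dyadicSum μ T n t, fun s t hs0 hst htT => ?_⟩
  have hlim := (((hcauchy t (hs0.trans hst) htT).tendsto_limUnder.sub
    (hcauchy s hs0 (hst.trans htT)).tendsto_limUnder).sub_const (μ s t)).abs
  refine le_of_tendsto_of_tendsto' hlim ?_
    (hμ.abs_dyadicSum_sub_sub_le_add hT hK hθ · hs0 hst htT)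
  simpa using tendsto_const_nhds.add
    ((tendsto_pow_atTop_nhds_zero_of_lt_one (by positivity) hr).const_mul (K * T ^ θ))

end AlmostAdditive

theorem apply_eq_apply_zero_of_abs_sub_le_rpow {h : ℝ → ℝ} {T C θ : ℝ} (hθ : 1 < θ)
    (hh : ∀ s t, 0 ≤ s → s ≤ t → t ≤ T → |h t - h s| ≤ C * (t - s) ^ θ) {t : ℝ}
    (ht0 : 0 ≤ t) (htT : t ≤ T) : h t = h 0 := by
  have hsmall : ∀ n : ℕ, 1 ≤ n → |h t - h 0| ≤ C * t ^ θ * (n : ℝ) ^ (1 - θ) := by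
    intro n hn
    have hn' : (0 : ℝ) < n := by exact_mod_cast hn
    have hchain := dist_le_range_sum_of_dist_le (f := fun k : ℕ => h (k * t / n)) n
      (d := fun _ => C * (t / n) ^ θ) fun {k} hk => by
        have hk' : (k : ℝ) + 1 ≤ n := by exact_mod_cast hk
        rw [Real.dist_eq, abs_sub_comm]
        convert hh (k * t / n) ((k + 1 : ℕ) * t / n) (by positivity) (by gcongr; simp)
          (by rw [div_le_iff₀ hn']; push_cast; nlinarith) using 3
        push_cast; ring
    simp only [CharP.cast_eq_zero, zero_mul, zero_div, sum_const, card_range,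
      nsmul_eq_mul] at hchain
    rw [mul_div_cancel_left₀ _ hn'.ne', Real.dist_eq, abs_sub_comm] at hchain
    refine hchain.trans_eq ?_
    rw [Real.div_rpow ht0 hn'.le, Real.rpow_sub hn', Real.rpow_one]
    field_simp
  have hlim : Tendsto (fun n : ℕ => C * t ^ θ * (n : ℝ) ^ (1 - θ)) atTop (𝓝 0) := by
    have := ((tendsto_rpow_neg_atTop (by linarith : 0 < θ - 1)).comp
      tendsto_natCast_atTop_atTop).const_mul (C * t ^ θ)
    simpa [Function.comp_def] using this
  have hzero : |h t - h 0| ≤ 0 := ge_of_tendsto hlim (eventually_atTop.2 ⟨1, hsmall⟩)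
  exact sub_eq_zero.1 (abs_nonpos_iff.1 hzero)

theorem almostAdditive_mul_sub {f g : ℝ → ℝ} {T α β Cf Cg : ℝ}
    (hα : 0 ≤ α) (hβ : 0 ≤ β) (hCf : 0 ≤ Cf) (hCg : 0 ≤ Cg)
    (hf : ∀ s t : ℝ, 0 ≤ s → s ≤ t → t ≤ T → |f t - f s| ≤ Cf * (t - s) ^ α)
    (hg : ∀ s t : ℝ, 0 ≤ s → s ≤ t → t ≤ T → |g t - g s| ≤ Cg * (t - s) ^ β) :
    AlmostAdditive (fun s t => f s * (g t - g s)) T (Cf * Cg) (α + β) := by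
  intro s u t hs hsu hut htT
  have hfu : |f u - f s| ≤ Cf * (t - s) ^ α :=
    (hf s u hs hsu (hut.trans htT)).trans (by gcongr)
  have hgu : |g t - g u| ≤ Cg * (t - s) ^ β :=
    (hg u t (hs.trans hsu) hut htT).trans (by gcongr)
  calc |f s * (g t - g s) - f s * (g u - g s) - f u * (g t - g u)|
      = |f u - f s| * |g t - g u| := by rw [← abs_mul, ← abs_neg]; ring_nf
    _ ≤ Cf * (t - s) ^ α * (Cg * (t - s) ^ β) :=
        mul_le_mul hfu hgu (abs_nonneg _) ((abs_nonneg _).trans hfu)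
    _ = Cf * Cg * (t - s) ^ (α + β) := by
        rw [Real.rpow_add_of_nonneg (by linarith) hα hβ]; ring

theorem young_integral_exists_general (T α β : ℝ) (hT : 0 < T)
    (hα : 0 < α) (hβ : 0 < β) (hαβ : 1 < α + β)
    (f g : ℝ → ℝ) (Cf Cg : ℝ) (hCf : 0 < Cf) (hCg : 0 < Cg)
    (hf : ∀ s t : ℝ, 0 ≤ s → s ≤ t → t ≤ T → |f t - f s| ≤ Cf * (t - s) ^ α)
    (hg : ∀ s t : ℝ, 0 ≤ s → s ≤ t → t ≤ T → |g t - g s| ≤ Cg * (t - s) ^ β) :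
    ∃ φ : ℝ → ℝ, ∃ c : ℝ, 0 < c ∧
      (∀ s t : ℝ, 0 ≤ s → s ≤ t → t ≤ T →
        |φ t - φ s - f s * (g t - g s)| ≤ c * (t - s) ^ (α + β)) ∧
      ∀ (ψ : ℝ → ℝ) (c' : ℝ), 0 < c' →
        (∀ s t : ℝ, 0 ≤ s → s ≤ t → t ≤ T →
          |ψ t - ψ s - f s * (g t - g s)| ≤ c' * (t - s) ^ (α + β)) →
        ∃ C₀ : ℝ, ∀ t ∈ Set.Icc (0:ℝ) T, ψ t = φ t + C₀ := by
  have hμ := almostAdditive_mul_sub hα.le hβ.le hCf.le hCg.le hf hg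
  obtain ⟨φ, hφ⟩ := hμ.exists_abs_sub_sub_le hT.le (by positivity) hαβ
  set c := Cf * Cg * ∑' k : ℕ, (2 / ((k : ℝ) + 1)) ^ (α + β)
  refine ⟨φ, c + 1, by positivity, fun s t hs hst htT => (hφ s t hs hst htT).trans ?_,
    fun ψ c' _ hψ => ⟨ψ 0 - φ 0, fun t ⟨ht0, htT⟩ => ?_⟩⟩
  · gcongr
    linarith
  have hdiff : ∀ s t, 0 ≤ s → s ≤ t → t ≤ T →
      |(ψ t - φ t) - (ψ s - φ s)| ≤ (c' + c) * (t - s) ^ (α + β) := fun s t hs hst htT =>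
    calc _ = |(ψ t - ψ s - f s * (g t - g s)) - (φ t - φ s - f s * (g t - g s))| := by ring_nf
      _ ≤ |ψ t - ψ s - f s * (g t - g s)| + |φ t - φ s - f s * (g t - g s)| := abs_sub _ _
      _ ≤ _ := by linarith [hψ s t hs hst htT, hφ s t hs hst htT]
  linarith [apply_eq_apply_zero_of_abs_sub_le_rpow hαβ hdiff ht0 htT]

/-- **Young integral via the sewing lemma.**
Let `T > 0`, `0 < α, β ≤ 1` with `α + β > 1`, and let `f, g : [0,T] → ℝ` be respectively
`α`- and `β`-Hölder continuous. Then there is a function `φ : [0,T] → ℝ` (the Young integral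
`∫₀^• f dg`) and a constant `c > 0` such that
`|φ_t − φ_s − f_s (g_t − g_s)| ≤ c |t−s|^{α+β}` for all `0 ≤ s ≤ t ≤ T`; moreover any two
such functions differ by an additive constant. -/
theorem young_integral_exists (T α β : ℝ) (hT : 0 < T)
    (hα : 0 < α) (hα1 : α ≤ 1) (hβ : 0 < β) (hβ1 : β ≤ 1) (hαβ : 1 < α + β)
    (f g : ℝ → ℝ) (Cf Cg : ℝ) (hCf : 0 < Cf) (hCg : 0 < Cg)
    (hf : ∀ s t : ℝ, 0 ≤ s → s ≤ t → t ≤ T → |f t - f s| ≤ Cf * (t - s) ^ α)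
    (hg : ∀ s t : ℝ, 0 ≤ s → s ≤ t → t ≤ T → |g t - g s| ≤ Cg * (t - s) ^ β) :
    ∃ φ : ℝ → ℝ, ∃ c : ℝ, 0 < c ∧
      (∀ s t : ℝ, 0 ≤ s → s ≤ t → t ≤ T →
        |φ t - φ s - f s * (g t - g s)| ≤ c * (t - s) ^ (α + β)) ∧
      ∀ (ψ : ℝ → ℝ) (c' : ℝ), 0 < c' →
        (∀ s t : ℝ, 0 ≤ s → s ≤ t → t ≤ T →
          |ψ t - ψ s - f s * (g t - g s)| ≤ c' * (t - s) ^ (α + β)) →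
        ∃ C₀ : ℝ, ∀ t ∈ Set.Icc (0:ℝ) T, ψ t = φ t + C₀ :=
  young_integral_exists_general T α β hT hα hβ hαβ f g Cf Cg hCf hCg hf hg
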